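/- Let A be a unital k-algebra with a G-action, U ⊆ G a subgroup, and σ: U\G → G a section. Define σ': tensors over A⟨G⟩⋊U → kU ⊗ (A⟨U\G⟩)^{⊗n+1} by σ'(u_{g₀}a₀⟨x₀⟩ ⊗ … ⊗ u_{gₙ}aₙ⟨xₙ⟩) = u_{g₀⋯gₙ} ⊗ (g₁⋯gₙ)⁻¹(a₀⟨σ(x₀)⟩) ⊗ … ⊗ gₙ⁻¹(a_{n-1}⟨σ(x_{n-1})⟩) ⊗ aₙ⟨σ(xₙ)⟩. Then the map Φ: u_g ⊗ ω ↦ u_g·i_*(ω) of Lemma 3.2, with Φ composed with σ', acts as the identity on the classes represented by elements in the image of σ'; i.e. σ' is a section of Φ after passing to the commutator quotient by kU. -/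

import Mathlib

/-!
With `ωᵢ = aᵢ⟨σ(xᵢ)⟩`, `Φ` sends the image of the generator to the class of
`u_{g₀⋯gₙ}(g₁⋯gₙ)⁻¹ω₀ ⊗ u_1(g₂⋯gₙ)⁻¹ω₁ ⊗ ⋯ ⊗ u_1 ωₙ`. Since
`u_{gₜ⋯gₙ}(gₜ₊₁⋯gₙ)⁻¹ωₜ = (u_{gₜ}ωₜ)·u_{gₜ₊₁⋯gₙ}`, the commutator relation moves `u_{gₜ₊₁⋯gₙ}`
from slot `t` into slot `t + 1`; after `n` such moves slot `i` holds `u_{gᵢ}ωᵢ`.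
-/

open scoped TensorProduct

section

variable (k : Type*) [Field k] (A : Type*) [Ring A] [Algebra k A]
variable (G : Type*) [Group G]

/-- The diagonal action of `h ∈ G` on `A⟨G⟩ = A ⊗ k⟨G⟩` (modelled as `G →₀ A`),
`h(a⟨γ⟩) = h(a)⟨hγ⟩`, as a `k`-linear map. -/
noncomputable def actAG (ρ : G →* (A ≃ₐ[k] A)) (h : G) : (G →₀ A) →ₗ[k] (G →₀ A) :=
  (Finsupp.lmapDomain A k (fun γ => h * γ)).comp
    (Finsupp.mapRange.linearMap (ρ h).toLinearMap)

variable (U : Subgroup G) (n : ℕ)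

/-- The underlying space of the crossed product `A⟨G⟩⋊U`, modelled as
`U →₀ (G →₀ A)` (i.e. the span of the `u_g·ω`, `g ∈ U`, `ω ∈ A⟨G⟩`). -/
abbrev CrossB := (U →₀ (G →₀ A))

/-- Left multiplication by `u_h` on `A⟨G⟩⋊U`: `u_h·(u_g ω) = u_{hg} ω`. -/
noncomputable def leftMulU (h : U) : CrossB A G U →ₗ[k] CrossB A G U :=
  Finsupp.lmapDomain (G →₀ A) k (fun g => h * g)

/-- Right multiplication by `u_h` on `A⟨G⟩⋊U`: `(u_g ω)·u_h = u_{gh} h⁻¹(ω)`. -/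
noncomputable def rightMulU (ρ : G →* (A ≃ₐ[k] A)) (h : U) :
    CrossB A G U →ₗ[k] CrossB A G U :=
  (Finsupp.lmapDomain (G →₀ A) k (fun g => g * h)).comp
    (Finsupp.mapRange.linearMap (actAG k A G ρ ((h : G))⁻¹))

/-- The `(n+1)`-fold tensor power (over `k`) of `A⟨G⟩⋊U`. -/
abbrev TensB := PiTensorProduct k (fun _ : Fin (n + 1) => CrossB A G U)

noncomputable instance : AddCommGroup (TensB k A G U n) :=
  @PiTensorProduct.instAddCommGroup (Fin (n + 1)) k _ (fun _ => CrossB A G U) _ _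

/-- Apply a linear endomorphism of `A⟨G⟩⋊U` in the `j`-th tensor slot. -/
noncomputable def mapAt (j : Fin (n + 1)) (f : CrossB A G U →ₗ[k] CrossB A G U) :
    TensB k A G U n →ₗ[k] TensB k A G U n :=
  PiTensorProduct.map (Function.update (fun _ => LinearMap.id) j f)

/-- The submodule of relations defining the commutator quotient of the relative
tensor power `(A⟨G⟩⋊U)^{⊗_{kU}(n+1)}` by `kU`: at each junction (cyclically,
including the outer commutator with `kU`) a right multiplication by `u_h` in slot
`j` is identified with the left multiplication by `u_h` in slot `j+1`. -/
noncomputable def relSub (ρ : G →* (A ≃ₐ[k] A)) : Submodule k (TensB k A G U n) :=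
  Submodule.span k {m | ∃ (h : U) (j : Fin (n + 1)) (y : TensB k A G U n),
    m = mapAt k A G U n j (rightMulU k A G U ρ h) y
      - mapAt k A G U n (j + 1) (leftMulU k A G U h) y}

/-- The map `Φ : Vect_k(Ad(U)) ⊗ Ω^n(A⟨G⟩) → Ω^n(A⟨G⟩⋊U : k⋊U)_♮` of Lemma 3.2,
`u_g ⊗ ω₀ ⊗ … ⊗ ωₙ ↦ [u_g·i(ω₀) ⊗ i(ω₁) ⊗ … ⊗ i(ωₙ)]`, where `i : A⟨G⟩ → A⟨G⟩⋊U`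
is the canonical inclusion. -/
noncomputable def PhiMap (ρ : G →* (A ≃ₐ[k] A)) (u : U) (ω : Fin (n + 1) → (G →₀ A)) :
    TensB k A G U n ⧸ relSub k A G U n ρ :=
  Submodule.Quotient.mk (PiTensorProduct.tprod k
    (fun i => if i = 0 then Finsupp.single u (ω i) else Finsupp.single (1 : U) (ω i)))

/-- The generator `u_{g₀}a₀⟨x₀⟩ ⊗ … ⊗ u_{gₙ}aₙ⟨xₙ⟩` of the tensor power of
`A⟨G⟩⋊U`, where the coset `xᵢ ∈ U\\G` labels the basis element `⟨σ(xᵢ)⟩` of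
`k⟨G⟩` via the section `σ`. -/
noncomputable def genT (σ : Quotient (QuotientGroup.rightRel U) → G)
    (g : Fin (n + 1) → U) (x : Fin (n + 1) → Quotient (QuotientGroup.rightRel U))
    (a : Fin (n + 1) → A) : TensB k A G U n :=
  PiTensorProduct.tprod k
    (fun i => Finsupp.single (g i) (Finsupp.single (σ (x i)) (a i)))

lemma actAG_one (ρ : G →* (A ≃ₐ[k] A)) : actAG k A G ρ 1 = LinearMap.id := by
  ext γ b : 2
  simp [actAG, Finsupp.mapDomain_single]

lemma leftMulU_single (h c : U) (v : G →₀ A) :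
    leftMulU k A G U h (Finsupp.single c v) = Finsupp.single (h * c) v := by
  simp [leftMulU, Finsupp.mapDomain_single]

lemma rightMulU_single (ρ : G →* (A ≃ₐ[k] A)) (h c : U) (v : G →₀ A) :
    rightMulU k A G U ρ h (Finsupp.single c v)
      = Finsupp.single (c * h) (actAG k A G ρ ((h : G))⁻¹ v) := by
  simp [rightMulU, Finsupp.mapDomain_single]

lemma mapAt_tprod (j : Fin (n + 1)) (f : CrossB A G U →ₗ[k] CrossB A G U)
    (v : Fin (n + 1) → CrossB A G U) :
    mapAt k A G U n j f (PiTensorProduct.tprod k v)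
      = PiTensorProduct.tprod k (Function.update v j (f (v j))) := by
  rw [mapAt, PiTensorProduct.map_tprod]
  congr 1
  funext i
  rcases eq_or_ne i j with rfl | hij
  · simp
  · simp [Function.update_of_ne hij]

lemma mk_tprod_update_rightMulU (ρ : G →* (A ≃ₐ[k] A)) (h : U) (j : Fin (n + 1))
    (v : Fin (n + 1) → CrossB A G U) :
    (Submodule.Quotient.mk (PiTensorProduct.tprod k
        (Function.update v j (rightMulU k A G U ρ h (v j)))) :
        TensB k A G U n ⧸ relSub k A G U n ρ)
      = Submodule.Quotient.mk (PiTensorProduct.tprod k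
        (Function.update v (j + 1) (leftMulU k A G U h (v (j + 1))))) := by
  rw [Submodule.Quotient.eq, ← mapAt_tprod, ← mapAt_tprod]
  exact Submodule.subset_span ⟨h, j, _, rfl⟩

lemma List.prod_drop_ofFn_eq_mul {M : Type*} [Monoid M] {m : ℕ} (g : Fin m → M) (t : Fin m) :
    ((List.ofFn g).drop t).prod = g t * ((List.ofFn g).drop (t + 1)).prod := by
  rw [List.drop_eq_getElem_cons (by simp), List.prod_cons, List.getElem_ofFn]

/-- The state after `t` moves: slots `i < t` hold `u_{gᵢ}ωᵢ`, slot `t` holds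
`u_{gₜ⋯gₙ}(gₜ₊₁⋯gₙ)⁻¹ωₜ`. -/
noncomputable def partialTensor (ρ : G →* (A ≃ₐ[k] A)) (g : Fin (n + 1) → U)
    (ω : Fin (n + 1) → (G →₀ A)) (t : Fin (n + 1)) : TensB k A G U n :=
  PiTensorProduct.tprod k fun i =>
    if i < t then Finsupp.single (g i) (ω i)
    else Finsupp.single (if i = t then ((List.ofFn g).drop t).prod else 1)
      (actAG k A G ρ (((((List.ofFn g).drop ((i : ℕ) + 1)).prod : U) : G))⁻¹ (ω i))

lemma mk_partialTensor_castSucc (ρ : G →* (A ≃ₐ[k] A)) (g : Fin (n + 1) → U)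
    (ω : Fin (n + 1) → (G →₀ A)) (t : Fin n) :
    (Submodule.Quotient.mk (partialTensor k A G U n ρ g ω t.castSucc) :
        TensB k A G U n ⧸ relSub k A G U n ρ)
      = Submodule.Quotient.mk (partialTensor k A G U n ρ g ω t.succ) := by
  set h : U := ((List.ofFn g).drop (t + 1)).prod
  set v : Fin (n + 1) → CrossB A G U := fun i =>
    if i ≤ t.castSucc then Finsupp.single (g i) (ω i)
    else Finsupp.single 1
      (actAG k A G ρ (((((List.ofFn g).drop ((i : ℕ) + 1)).prod : U) : G))⁻¹ (ω i))
  have hA : partialTensor k A G U n ρ g ω t.castSucc = PiTensorProduct.tprod k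
      (Function.update v t.castSucc (rightMulU k A G U ρ h (v t.castSucc))) := by
    rw [partialTensor]
    congr 1
    funext i
    rcases lt_trichotomy i t.castSucc with hi | rfl | hi
    · simp only [v, Function.update_of_ne hi.ne, if_pos hi, if_pos hi.le]
    · rw [List.prod_drop_ofFn_eq_mul g t.castSucc]
      simp only [v, Function.update_self, lt_irrefl, le_refl, if_true, if_false,
        rightMulU_single, Fin.val_castSucc, h]
    · simp only [v, Function.update_of_ne hi.ne', if_neg (not_lt.mpr hi.le),
        if_neg (not_le.mpr hi), if_neg hi.ne']
  have hB : partialTensor k A G U n ρ g ω t.succ = PiTensorProduct.tprod k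
      (Function.update v (t.castSucc + 1) (leftMulU k A G U h (v (t.castSucc + 1)))) := by
    rw [partialTensor, Fin.coeSucc_eq_succ]
    congr 1
    funext i
    rcases lt_trichotomy i t.succ with hi | rfl | hi
    · simp only [v, Function.update_of_ne hi.ne, if_pos hi, if_pos (Fin.le_castSucc_iff.mpr hi)]
    · simp only [v, Function.update_self, lt_irrefl, if_true, if_false,
        Fin.succ_le_castSucc_iff, leftMulU_single, mul_one, Fin.val_succ, h]
    · simp only [v, Function.update_of_ne hi.ne', if_neg (not_lt.mpr hi.le), if_neg hi.ne',
        if_neg (not_le.mpr (Fin.castSucc_lt_succ.trans hi))]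
  rw [hA, hB, mk_tprod_update_rightMulU]

lemma phiMap_eq_mk_partialTensor_zero (ρ : G →* (A ≃ₐ[k] A)) (g : Fin (n + 1) → U)
    (ω : Fin (n + 1) → (G →₀ A)) :
    PhiMap k A G U n ρ ((List.ofFn g).prod)
        (fun i => actAG k A G ρ (((((List.ofFn g).drop ((i : ℕ) + 1)).prod : U) : G))⁻¹ (ω i))
      = Submodule.Quotient.mk (partialTensor k A G U n ρ g ω 0) := by
  rw [PhiMap, partialTensor]
  congr 2
  funext i
  rcases eq_or_ne i 0 with rfl | hi
  · simp
  · simp [hi]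

lemma partialTensor_last (ρ : G →* (A ≃ₐ[k] A)) (g : Fin (n + 1) → U)
    (ω : Fin (n + 1) → (G →₀ A)) :
    partialTensor k A G U n ρ g ω (Fin.last n)
      = PiTensorProduct.tprod k fun i => Finsupp.single (g i) (ω i) := by
  rw [partialTensor]
  congr 1
  funext i
  rcases (Fin.le_last i).lt_or_eq with hi | rfl
  · rw [if_pos hi]
  · have hnil : (List.ofFn g).drop (n + 1) = [] := List.drop_eq_nil_of_le (by simp)
    rw [List.prod_drop_ofFn_eq_mul g (Fin.last n)]
    simp only [lt_irrefl, if_false, if_true, Fin.val_last, hnil, List.prod_nil, mul_one,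
      OneMemClass.coe_one, inv_one, actAG_one, LinearMap.id_apply]

theorem phiMap_eq_mk_tprod (ρ : G →* (A ≃ₐ[k] A)) (g : Fin (n + 1) → U)
    (ω : Fin (n + 1) → (G →₀ A)) :
    PhiMap k A G U n ρ ((List.ofFn g).prod)
        (fun i => actAG k A G ρ (((((List.ofFn g).drop ((i : ℕ) + 1)).prod : U) : G))⁻¹ (ω i))
      = Submodule.Quotient.mk
          (PiTensorProduct.tprod k fun i => Finsupp.single (g i) (ω i)) := by
  have hsteps : ∀ t : Fin (n + 1),
      (Submodule.Quotient.mk (partialTensor k A G U n ρ g ω 0) :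
        TensB k A G U n ⧸ relSub k A G U n ρ)
        = Submodule.Quotient.mk (partialTensor k A G U n ρ g ω t) :=
    Fin.induction rfl fun t ih => ih.trans (mk_partialTensor_castSucc k A G U n ρ g ω t)
  rw [phiMap_eq_mk_partialTensor_zero, hsteps (Fin.last n), partialTensor_last]

theorem stmt14 (ρ : G →* (A ≃ₐ[k] A))
    (σ : Quotient (QuotientGroup.rightRel U) → G) :
    ∀ (g : Fin (n + 1) → U) (x : Fin (n + 1) → Quotient (QuotientGroup.rightRel U))
      (a : Fin (n + 1) → A),
      PhiMap k A G U n ρ ((List.ofFn g).prod)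
        (fun i => actAG k A G ρ
          (((((List.ofFn g).drop ((i : ℕ) + 1)).prod : U) : G))⁻¹
          (Finsupp.single (σ (x i)) (a i)))
        = Submodule.Quotient.mk (genT k A G U n σ g x a) :=
  fun g x a => phiMap_eq_mk_tprod k A G U n ρ g fun i => Finsupp.single (σ (x i)) (a i)

end
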